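/- arXiv:2309.14484 — 4 statements merged into one kernel-verified Lean document; each statement's English description precedes it below -/
import Mathlib

section
/- Fix 0 < p₁ < τ < p₀ < 1 and a constant C > 0. For each n, let N_n ≤ C·n and let m_n be a sequence of positive integers with m_n / log n → ∞. For each n let H₁,…,H_{N_n} be independent random variables, each distributed either Binom(m_n, p₀) or Binom(m_n, p₁) (according to an arbitrary ground-truth labeling), and classify H_j as having parameter p₁ if and only if H_j ≤ m_n τ. Then the probability that any of the N_n variables is misclassified tends to 0 as n → ∞. -/
/-!
Chernoff bound: tilting by `exp (t (X - m τ))` bounds each misclassification probability by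
`r ^ m` with `r < 1` depending only on `p₀, p₁, τ`, because the tilted Bernoulli moment
generating function has derivative `p - τ` at `t = 0` and so drops below `1` for a small tilt
of the right sign. A union bound over `N ≤ C n` indices leaves
`C n r ^ m = C exp (log n + m log r)`, which tends to `0` since `m / log n → ∞`.
-/

open MeasureTheory ProbabilityTheory Filter Real Finset

/-- `E[exp (t (B - τ))]` for a Bernoulli(`p`) variable `B`. -/
noncomputable def bernoulliChernoff (p τ t : ℝ) : ℝ := (1 - p + p * exp t) * exp (-(t * τ))

lemma bernoulliChernoff_pos {p : ℝ} (hp0 : 0 ≤ p) (hp1 : p ≤ 1) (τ t : ℝ) :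
    0 < bernoulliChernoff p τ t := by
  have hmgf : 0 < 1 - p + p * exp t := by
    rcases hp1.lt_or_eq with hp1 | rfl
    · have : 0 < 1 - p := sub_pos.2 hp1
      positivity
    · simp [exp_pos]
  exact mul_pos hmgf (exp_pos _)

lemma hasDerivAt_bernoulliChernoff_zero (p τ : ℝ) :
    HasDerivAt (bernoulliChernoff p τ) (p - τ) 0 := by
  have hmgf : HasDerivAt (fun t => 1 - p + p * exp t) (p * exp 0) 0 :=
    ((hasDerivAt_exp 0).const_mul p).const_add (1 - p)
  have htilt : HasDerivAt (fun t => exp (-(t * τ))) (exp (-(0 * τ)) * -τ) 0 :=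
    (hasDerivAt_mul_const τ).fun_neg.exp
  refine (hmgf.fun_mul htilt).congr_deriv ?_
  norm_num [sub_eq_add_neg]

lemma HasDerivAt.exists_gt_lt_of_neg {f : ℝ → ℝ} {f' x : ℝ} (hf : HasDerivAt f f' x)
    (hf' : f' < 0) : ∃ y, x < y ∧ f y < f x := by
  obtain ⟨y, hslope, hxy⟩ :=
    ((hf.hasDerivWithinAt.liminf_right_slope_le hf').and_eventually self_mem_nhdsWithin).exists
  refine ⟨y, hxy, ?_⟩
  rw [slope_def_field, div_lt_iff₀ (sub_pos.2 hxy)] at hslope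
  linarith

lemma exists_bernoulliChernoff_lt_one {p τ : ℝ} (h : p ≠ τ) :
    ∃ t, 0 < t * (τ - p) ∧ bernoulliChernoff p τ t < 1 := by
  have hsq : 0 < (τ - p) ^ 2 := sq_pos_of_ne_zero (sub_ne_zero.2 h.symm)
  -- reparametrizing by `t = s (τ - p)` makes the derivative at `0` negative in both cases
  have hd : HasDerivAt (fun s => bernoulliChernoff p τ (s * (τ - p))) ((p - τ) * (τ - p)) 0 :=
    (hasDerivAt_bernoulliChernoff_zero p τ).comp_of_eq 0
      (hasDerivAt_mul_const (τ - p)) (zero_mul _).symm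
  obtain ⟨s, hs, hlt⟩ := hd.exists_gt_lt_of_neg (by nlinarith)
  refine ⟨s * (τ - p), by nlinarith, ?_⟩
  simpa [bernoulliChernoff] using hlt

lemma sum_exp_mul_binomial (m : ℕ) (p t : ℝ) :
    ∑ k ∈ range (m + 1), exp (t * k) * (m.choose k * p ^ k * (1 - p) ^ (m - k))
      = (1 - p + p * exp t) ^ m := by
  rw [add_comm (1 - p), add_pow]
  refine sum_congr rfl fun k _ => ?_
  rw [mul_pow, ← exp_nat_mul, mul_comm (k : ℝ)]
  ring

section Binomial

variable {Ω : Type*} [MeasurableSpace Ω] {μ : Measure Ω} {X : Ω → ℕ} {m : ℕ} {p : ℝ}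

lemma measure_binomial_preimage_le (hp0 : 0 ≤ p) (hp1 : p ≤ 1)
    (hlaw : ∀ k, μ {ω | X ω = k} = ENNReal.ofReal (m.choose k * p ^ k * (1 - p) ^ (m - k)))
    {s : Set ℕ} {τ t : ℝ} (hs : ∀ k ∈ s, 0 ≤ t * (k - m * τ)) :
    μ (X ⁻¹' s) ≤ ENNReal.ofReal (bernoulliChernoff p τ t ^ m) := by
  classical
  set f : ℕ → ℝ := fun k => m.choose k * p ^ k * (1 - p) ^ (m - k)
  have hq : 0 ≤ 1 - p := sub_nonneg.2 hp1
  have hf : ∀ k, 0 ≤ f k := fun k => by positivity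
  have hnull : μ {ω | m < X ω} = 0 := by
    have : {ω | m < X ω} = ⋃ k : ℕ, {ω | X ω = m + 1 + k} := by
      ext ω; simp only [Set.mem_ofPred_eq, Set.mem_iUnion]
      exact ⟨fun h => ⟨X ω - (m + 1), by omega⟩, by omega⟩
    rw [this]
    refine measure_iUnion_null fun k => ?_
    rw [hlaw, Nat.choose_eq_zero_of_lt (by omega)]
    simp
  set S := (range (m + 1)).filter (· ∈ s)
  have hcover : X ⁻¹' s ⊆ (⋃ k ∈ S, {ω | X ω = k}) ∪ {ω | m < X ω} := by
    intro ω hω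
    by_cases hX : X ω ≤ m
    · exact Or.inl (Set.mem_biUnion (mem_filter.2 ⟨mem_range.2 (by omega), hω⟩) rfl)
    · exact Or.inr (not_le.1 hX)
  have htilt : ∀ k : ℕ,
      exp (t * (k - m * τ)) * f k = exp (-(t * τ)) ^ m * (exp (t * k) * f k) := by
    intro k
    have : exp (t * (k - m * τ)) = exp (-(t * τ)) ^ m * exp (t * k) := by
      rw [← exp_nat_mul, ← exp_add]
      ring_nf
    rw [this, mul_assoc]
  calc μ (X ⁻¹' s)
      ≤ μ (⋃ k ∈ S, {ω | X ω = k}) + μ {ω | m < X ω} :=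
        (measure_mono hcover).trans (measure_union_le _ _)
    _ ≤ ∑ k ∈ S, μ {ω | X ω = k} := by rw [hnull, add_zero]; exact measure_biUnion_finset_le _ _
    _ = ENNReal.ofReal (∑ k ∈ S, f k) := by
        rw [ENNReal.ofReal_sum_of_nonneg fun k _ => hf k]; exact sum_congr rfl fun k _ => hlaw k
    _ ≤ ENNReal.ofReal (∑ k ∈ S, exp (t * (k - m * τ)) * f k) :=
        ENNReal.ofReal_le_ofReal <| sum_le_sum fun k hk =>
          le_mul_of_one_le_left (hf k) (one_le_exp (hs k (mem_filter.1 hk).2))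
    _ ≤ ENNReal.ofReal (∑ k ∈ range (m + 1), exp (t * (k - m * τ)) * f k) :=
        ENNReal.ofReal_le_ofReal <| sum_le_sum_of_subset_of_nonneg (filter_subset _ _)
          fun k _ _ => mul_nonneg (exp_pos _).le (hf k)
    _ = ENNReal.ofReal (bernoulliChernoff p τ t ^ m) := by
        rw [sum_congr rfl fun k _ => htilt k, ← mul_sum, sum_exp_mul_binomial,
          bernoulliChernoff, mul_pow, mul_comm]

/-- `P` is the true answer to "is `p < τ`?"; the event is that the test `X ≤ m τ` gets it wrong. -/
lemma measure_binomial_misclassified_le (hp0 : 0 ≤ p) (hp1 : p ≤ 1)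
    (hlaw : ∀ k, μ {ω | X ω = k} = ENNReal.ofReal (m.choose k * p ^ k * (1 - p) ^ (m - k)))
    {τ t : ℝ} (ht : 0 < t * (τ - p)) {P : Prop} (hP : P ↔ p < τ) :
    μ {ω | ¬(P ↔ (X ω : ℝ) ≤ m * τ)} ≤ ENNReal.ofReal (bernoulliChernoff p τ t ^ m) := by
  refine measure_binomial_preimage_le (s := {k | ¬(P ↔ (k : ℝ) ≤ m * τ)}) hp0 hp1 hlaw ?_
  intro k hk
  rw [Set.mem_ofPred_eq, hP] at hk
  by_cases hpτ : p < τ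
  · have : 0 < t := pos_of_mul_pos_left ht (sub_pos.2 hpτ).le
    simp only [hpτ, true_iff, not_le] at hk
    nlinarith
  · have : t < 0 := neg_of_mul_pos_left ht (by linarith)
    simp only [hpτ, false_iff, not_not] at hk
    nlinarith

end Binomial

lemma measure_setOf_exists_le {Ω ι : Type*} [MeasurableSpace Ω] [Fintype ι] {μ : Measure Ω}
    {E : ι → Set Ω} {b : ℝ} (h : ∀ i, μ (E i) ≤ ENNReal.ofReal b) :
    μ {ω | ∃ i, ω ∈ E i} ≤ ENNReal.ofReal (Fintype.card ι * b) := by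
  rw [Set.ofPred_exists, ENNReal.ofReal_mul (Nat.cast_nonneg _), ENNReal.ofReal_natCast,
    ← nsmul_eq_mul, ← card_univ, ← sum_const]
  exact (measure_iUnion_fintype_le μ E).trans (sum_le_sum fun i _ => h i)

lemma tendsto_natCast_mul_pow_of_tendsto_div_log {r : ℝ} (hr0 : 0 < r) (hr1 : r < 1)
    {m : ℕ → ℕ} (hm : Tendsto (fun n : ℕ => (m n : ℝ) / log n) atTop atTop) :
    Tendsto (fun n : ℕ => (n : ℝ) * r ^ m n) atTop (nhds 0) := by
  have hlog : Tendsto (fun n : ℕ => log n) atTop atTop :=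
    tendsto_log_atTop.comp tendsto_natCast_atTop_atTop
  have hexp : Tendsto (fun n : ℕ => log n * (1 + m n / log n * log r)) atTop atBot :=
    hlog.atTop_mul_atBot₀ <|
      tendsto_atBot_add_const_left _ 1 (hm.atTop_mul_const_of_neg (log_neg hr0 hr1))
  refine (tendsto_exp_atBot.comp hexp).congr' ?_
  filter_upwards [eventually_ge_atTop 2] with n hn
  have hn : (1 : ℝ) < n := by exact_mod_cast hn
  have : log n * (1 + m n / log n * log r) = log n + m n * log r := by
    field_simp [(log_pos hn).ne']
  rw [Function.comp_apply, this, exp_add, exp_log (by linarith), ← log_pow,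
    exp_log (pow_pos hr0 _)]

theorem stmt_5_general (p₀ p₁ τ C : ℝ) (h0 : 0 < p₁) (h1 : p₁ < τ) (h2 : τ < p₀) (h3 : p₀ < 1)
    (Ω : ℕ → Type*) [∀ n, MeasurableSpace (Ω n)]
    (μ : ∀ n, Measure (Ω n))
    (N : ℕ → ℕ) (hN : ∀ n, (N n : ℝ) ≤ C * n)
    (m : ℕ → ℕ)
    (hm : Tendsto (fun n : ℕ => (m n : ℝ) / Real.log n) atTop atTop)
    (J : ∀ n, Finset (Fin (N n))) (H : ∀ n, Fin (N n) → Ω n → ℕ)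
    (hlaw1 : ∀ n, ∀ j ∈ J n, ∀ k : ℕ,
      μ n {ω | H n j ω = k}
        = ENNReal.ofReal (((m n).choose k : ℝ) * p₁ ^ k * (1 - p₁) ^ (m n - k)))
    (hlaw0 : ∀ n, ∀ j ∉ J n, ∀ k : ℕ,
      μ n {ω | H n j ω = k}
        = ENNReal.ofReal (((m n).choose k : ℝ) * p₀ ^ k * (1 - p₀) ^ (m n - k))) :
    Tendsto
      (fun n : ℕ =>
        μ n {ω | ∃ j : Fin (N n), ¬ (j ∈ J n ↔ (H n j ω : ℝ) ≤ (m n : ℝ) * τ)})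
      atTop (nhds 0) := by
  obtain ⟨t₁, ht₁, hB₁⟩ := exists_bernoulliChernoff_lt_one h1.ne
  obtain ⟨t₀, ht₀, hB₀⟩ := exists_bernoulliChernoff_lt_one h2.ne'
  have hp₁ : p₁ ≤ 1 := by linarith
  have hp₀ : 0 ≤ p₀ := by linarith
  set r := max (bernoulliChernoff p₁ τ t₁) (bernoulliChernoff p₀ τ t₀)
  have hr0 : 0 < r := lt_max_of_lt_left (bernoulliChernoff_pos h0.le hp₁ τ t₁)
  have hbad : ∀ n j, μ n {ω | ¬(j ∈ J n ↔ (H n j ω : ℝ) ≤ m n * τ)}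
      ≤ ENNReal.ofReal (r ^ m n) := by
    intro n j
    by_cases hj : j ∈ J n
    · refine (measure_binomial_misclassified_le h0.le hp₁ (hlaw1 n j hj) ht₁
        (iff_of_true hj h1)).trans (ENNReal.ofReal_le_ofReal ?_)
      exact pow_le_pow_left₀ (bernoulliChernoff_pos h0.le hp₁ τ t₁).le (le_max_left _ _) _
    · refine (measure_binomial_misclassified_le hp₀ h3.le (hlaw0 n j hj) ht₀
        (iff_of_false hj h2.not_gt)).trans (ENNReal.ofReal_le_ofReal ?_)
      exact pow_le_pow_left₀ (bernoulliChernoff_pos hp₀ h3.le τ t₀).le (le_max_right _ _) _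
  have hbound : ∀ n, μ n {ω | ∃ j : Fin (N n), ¬(j ∈ J n ↔ (H n j ω : ℝ) ≤ m n * τ)}
      ≤ ENNReal.ofReal (C * (n * r ^ m n)) := fun n =>
    (measure_setOf_exists_le (hbad n)).trans <| ENNReal.ofReal_le_ofReal <| by
      rw [Fintype.card_fin, ← mul_assoc]
      exact mul_le_mul_of_nonneg_right (hN n) (by positivity)
  have hlim := (tendsto_natCast_mul_pow_of_tendsto_div_log hr0 (max_lt hB₁ hB₀) hm).const_mul C
  rw [mul_zero] at hlim
  exact tendsto_of_tendsto_of_tendsto_of_le_of_le tendsto_const_nhds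
    (by simpa using ENNReal.tendsto_ofReal hlim) (fun _ => zero_le) hbound

/-- Distribution-aware replica detection: fix `0 < p₁ < τ < p₀ < 1` and `C > 0`; for each `n`
let `H_1,…,H_{N_n}` (`N_n ≤ Cn`) be independent, each `Binom(m_n, p₁)` (for `j ∈ J_n`) or
`Binom(m_n, p₀)` (for `j ∉ J_n`), with `m_n / log n → ∞`. Classifying `j` as a `p₁`-index iff
`H_j ≤ m_n τ`, the probability of any misclassification tends to `0`. -/
theorem stmt_5 (p₀ p₁ τ C : ℝ) (h0 : 0 < p₁) (h1 : p₁ < τ) (h2 : τ < p₀) (h3 : p₀ < 1)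
    (hC : 0 < C)
    (Ω : ℕ → Type*) [∀ n, MeasurableSpace (Ω n)]
    (μ : ∀ n, Measure (Ω n)) [∀ n, IsProbabilityMeasure (μ n)]
    (N : ℕ → ℕ) (hN : ∀ n, (N n : ℝ) ≤ C * n)
    (m : ℕ → ℕ) (hmpos : ∀ n, 1 ≤ m n)
    (hm : Tendsto (fun n : ℕ => (m n : ℝ) / Real.log n) atTop atTop)
    (J : ∀ n, Finset (Fin (N n))) (H : ∀ n, Fin (N n) → Ω n → ℕ)
    (hmeas : ∀ n j, Measurable (H n j))
    (hindep : ∀ n, iIndepFun (H n) (μ n))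
    (hlaw1 : ∀ n, ∀ j ∈ J n, ∀ k : ℕ,
      μ n {ω | H n j ω = k}
        = ENNReal.ofReal (((m n).choose k : ℝ) * p₁ ^ k * (1 - p₁) ^ (m n - k)))
    (hlaw0 : ∀ n, ∀ j ∉ J n, ∀ k : ℕ,
      μ n {ω | H n j ω = k}
        = ENNReal.ofReal (((m n).choose k : ℝ) * p₀ ^ k * (1 - p₀) ^ (m n - k))) :
    Tendsto
      (fun n : ℕ =>
        μ n {ω | ∃ j : Fin (N n), ¬ (j ∈ J n ↔ (H n j ω : ℝ) ≤ (m n : ℝ) * τ)})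
      atTop (nhds 0) :=
  stmt_5_general p₀ p₁ τ C h0 h1 h2 h3 Ω μ N hN m hm J H hlaw1 hlaw0
end

section
/- Let 𝔛 be a finite set with |𝔛| ≥ 2 and let p_{X,Y} be a joint pmf on 𝔛 × 𝔛 with marginals p_X and p_Y. If p_{X,Y} ≠ p_X·p_Y, then there exists a bijection Φ : 𝔛 → 𝔛 such that Σ_{x∈𝔛} p_{X,Y}(x, Φ(x)) ≠ Σ_{x∈𝔛} p_X(x) p_Y(Φ(x)). -/
/-!
Put `f x y = p_{X,Y}(x, y) - p_X(x) p_Y(y)`; its rows and columns sum to zero. If every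
permutation sum `∑ x, f x (Φ x)` vanished, then comparing `Φ` with `Φ * swap a x` would give
the exchange identity `f a b + f x y = f a y + f x b` for all `a b x y`. Summing it over `x` and
`y` leaves `|𝔛|² f a b = 0`, so `p_{X,Y}` would be the product of its marginals.
-/

open Finset Equiv

namespace Equiv.Perm

variable {α : Type*}

theorem exists_apply_eq_and_apply_eq {a x b y : α} (hax : a ≠ x) (hby : b ≠ y) :
    ∃ σ : Perm α, σ a = b ∧ σ x = y := by
  classical
  refine ⟨swap (swap a b x) y * swap a b, ?_, by simp⟩
  have hxb : swap a b x ≠ b := by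
    rw [Ne, swap_apply_eq_iff, swap_apply_right]
    exact hax.symm
  simp [swap_apply_of_ne_of_ne hxb.symm hby]

variable [Fintype α] {M : Type*} [AddCommGroup M]

theorem sum_apply_mul_swap [DecidableEq α] (f : α → α → M) (σ : Perm α) {a x : α}
    (hax : a ≠ x) :
    ∑ z, f z ((σ * swap a x) z) + f a (σ a) + f x (σ x)
      = ∑ z, f z (σ z) + f a (σ x) + f x (σ a) := by
  have hdiff : ∑ z, (f z ((σ * swap a x) z) - f z (σ z))
      = (f a (σ x) - f a (σ a)) + (f x (σ a) - f x (σ x)) := by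
    rw [sum_eq_add_of_mem a x (mem_univ a) (mem_univ x) hax]
    · simp
    · rintro z - ⟨hza, hzx⟩
      simp [swap_apply_of_ne_of_ne hza hzx]
  rw [sum_sub_distrib] at hdiff
  rw [← sub_eq_zero, ← sub_eq_zero.mpr hdiff]
  abel

variable {f : α → α → M}

theorem add_eq_add_of_forall_sum_perm_eq_zero (hperm : ∀ σ : Perm α, ∑ z, f z (σ z) = 0)
    (a b x y : α) : f a b + f x y = f a y + f x b := by
  classical
  rcases eq_or_ne a x with rfl | hax
  · exact add_comm _ _
  rcases eq_or_ne b y with rfl | hby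
  · rfl
  obtain ⟨σ, hσa, hσx⟩ := exists_apply_eq_and_apply_eq hax hby
  simpa only [hperm, hσa, hσx, zero_add] using sum_apply_mul_swap f σ hax

theorem eq_zero_of_forall_sum_perm_eq_zero [IsAddTorsionFree M]
    (hperm : ∀ σ : Perm α, ∑ z, f z (σ z) = 0)
    (hrow : ∀ x, ∑ y, f x y = 0) (hcol : ∀ y, ∑ x, f x y = 0) (a b : α) : f a b = 0 := by
  have hsum : ∑ x, ∑ y, (f a b + f x y) = ∑ x, ∑ y, (f a y + f x b) := by
    simp_rw [add_eq_add_of_forall_sum_perm_eq_zero hperm a b]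
  simp only [sum_add_distrib, hrow, hcol, sum_const, card_univ, smul_zero, add_zero,
    ← smul_sum, smul_smul] at hsum
  have hcard : Fintype.card α * Fintype.card α ≠ 0 := by
    have : Nonempty α := ⟨a⟩
    positivity
  exact (nsmul_eq_zero_iff_right hcard).mp hsum

end Equiv.Perm

theorem stmt_8_general {𝔛 : Type*} [Fintype 𝔛]
    (pXY : 𝔛 → 𝔛 → ℝ)
    (hsum : ∑ x, ∑ y, pXY x y = 1)
    (pX : 𝔛 → ℝ) (hpX : ∀ x, pX x = ∑ y, pXY x y)
    (pY : 𝔛 → ℝ) (hpY : ∀ y, pY y = ∑ x, pXY x y)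
    (hdep : ∃ x y, pXY x y ≠ pX x * pY y) :
    ∃ Φ : 𝔛 ≃ 𝔛, ∑ x, pXY x (Φ x) ≠ ∑ x, pX x * pY (Φ x) := by
  by_contra! hindep
  obtain ⟨a, b, hab⟩ := hdep
  have hX : ∑ x, pX x = 1 := by simp_rw [hpX]; exact hsum
  have hY : ∑ y, pY y = 1 := by simp_rw [hpY]; rw [sum_comm]; exact hsum
  refine hab (sub_eq_zero.mp <|
    Perm.eq_zero_of_forall_sum_perm_eq_zero (f := fun x y ↦ pXY x y - pX x * pY y) ?_ ?_ ?_ a b)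
  · intro σ
    simp only [sum_sub_distrib, hindep σ, sub_self]
  · intro x
    simp only [sum_sub_distrib, ← mul_sum, hY, mul_one, hpX, sub_self]
  · intro y
    simp only [sum_sub_distrib, ← sum_mul, hX, one_mul, hpY, sub_self]

/-- If a joint pmf `p_{X,Y}` on `𝔛 × 𝔛` (with `|𝔛| ≥ 2`) is not the product of its marginals,
then there exists a bijective remapping `Φ : 𝔛 ≃ 𝔛` such that
`∑ x, p_{X,Y}(x, Φ x) ≠ ∑ x, p_X(x) p_Y(Φ x)`. -/
theorem stmt_8 {𝔛 : Type*} [Fintype 𝔛] (hcard : 2 ≤ Fintype.card 𝔛)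
    (pXY : 𝔛 → 𝔛 → ℝ)
    (hnonneg : ∀ x y, 0 ≤ pXY x y) (hsum : ∑ x, ∑ y, pXY x y = 1)
    (pX : 𝔛 → ℝ) (hpX : ∀ x, pX x = ∑ y, pXY x y)
    (pY : 𝔛 → ℝ) (hpY : ∀ y, pY y = ∑ x, pXY x y)
    (hdep : ∃ x y, pXY x y ≠ pX x * pY y) :
    ∃ Φ : 𝔛 ≃ 𝔛, ∑ x, pXY x (Φ x) ≠ ∑ x, pX x * pY (Φ x) :=
  stmt_8_general pXY hsum pX hpX pY hpY hdep
end

section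
/- Let 0 < α < 1 and p₀ ≠ p₁ be real numbers, define F_k = α p₀^k + (1−α) p₁^k for k = 1, 2, 3 and A = (F₃ − F₁F₂)/(F₂ − F₁²). Then A² − 4AF₁ + 4F₂ = (p₀ − p₁)², and consequently (A + √(A² − 4AF₁ + 4F₂))/2 = max(p₀, p₁) and (A − √(A² − 4AF₁ + 4F₂))/2 = min(p₀, p₁). -/
/-! The variance of the mixture is `F₂ - F₁² = α(1-α)(p₀ - p₁)²`, and `F₃ - F₁F₂` is
exactly `(p₀ + p₁)` times it, so `A = p₀ + p₁` as soon as the mixture is non-degenerate.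
Since `(p₀ + p₁)F₁ = F₂ + p₀p₁`, the quantity `A² - 4AF₁ + 4F₂` is the discriminant
`(p₀ + p₁)² - 4p₀p₁` of the quadratic with roots `p₀, p₁`, and the two recovery formulas
are `max` and `min` written as `(a + b ± |a - b|)/2`. -/

section MixtureMoments

variable {R : Type*} [CommRing R] {α p₀ p₁ : R} {F : ℕ → R}

theorem mixture_moment_two_sub_sq (hF : ∀ k, F k = α * p₀ ^ k + (1 - α) * p₁ ^ k) :
    F 2 - F 1 ^ 2 = α * (1 - α) * (p₀ - p₁) ^ 2 := by
  simp only [hF]; ring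

theorem mixture_moment_three_sub_mul (hF : ∀ k, F k = α * p₀ ^ k + (1 - α) * p₁ ^ k) :
    F 3 - F 1 * F 2 = (p₀ + p₁) * (F 2 - F 1 ^ 2) := by
  simp only [hF]; ring

theorem mixture_discriminant (hF : ∀ k, F k = α * p₀ ^ k + (1 - α) * p₁ ^ k) :
    (p₀ + p₁) ^ 2 - 4 * (p₀ + p₁) * F 1 + 4 * F 2 = (p₀ - p₁) ^ 2 := by
  simp only [hF]; ring

end MixtureMoments

theorem mixture_moment_ratio {K : Type*} [Field K] {α p₀ p₁ : K} {F : ℕ → K}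
    (hα0 : α ≠ 0) (hα1 : α ≠ 1) (hne : p₀ ≠ p₁)
    (hF : ∀ k, F k = α * p₀ ^ k + (1 - α) * p₁ ^ k) :
    (F 3 - F 1 * F 2) / (F 2 - F 1 ^ 2) = p₀ + p₁ := by
  have hvar : F 2 - F 1 ^ 2 ≠ 0 := by
    rw [mixture_moment_two_sub_sq hF]
    exact mul_ne_zero (mul_ne_zero hα0 (sub_ne_zero.2 hα1.symm))
      (pow_ne_zero 2 (sub_ne_zero.2 hne))
  rw [mixture_moment_three_sub_mul hF, mul_div_cancel_right₀ _ hvar]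

section HalfSumAbs

variable {K : Type*} [Field K] [LinearOrder K] [IsStrictOrderedRing K]

theorem add_add_abs_sub_div_two (a b : K) : (a + b + |a - b|) / 2 = max a b := by
  rw [abs_sub_comm, ← two_nsmul_sup_eq_add_add_abs_sub, two_nsmul]; ring

theorem add_sub_abs_sub_div_two (a b : K) : (a + b - |a - b|) / 2 = min a b := by
  rw [abs_sub_comm, ← two_nsmul_inf_eq_add_sub_abs_sub, two_nsmul]; ring

end HalfSumAbs

/-- With `F_k = α p₀^k + (1-α) p₁^k` and `A = (F₃ - F₁F₂)/(F₂ - F₁²)`, one has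
`A² - 4AF₁ + 4F₂ = (p₀ - p₁)²`, hence `(A + √(A² - 4AF₁ + 4F₂))/2 = max p₀ p₁` and
`(A - √(A² - 4AF₁ + 4F₂))/2 = min p₀ p₁`. -/
theorem stmt_11 (α p₀ p₁ : ℝ) (hα0 : 0 < α) (hα1 : α < 1) (hne : p₀ ≠ p₁)
    (F : ℕ → ℝ) (hF : ∀ k, F k = α * p₀ ^ k + (1 - α) * p₁ ^ k)
    (A : ℝ) (hA : A = (F 3 - F 1 * F 2) / (F 2 - (F 1) ^ 2)) :
    A ^ 2 - 4 * A * F 1 + 4 * F 2 = (p₀ - p₁) ^ 2 ∧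
      (A + Real.sqrt (A ^ 2 - 4 * A * F 1 + 4 * F 2)) / 2 = max p₀ p₁ ∧
      (A - Real.sqrt (A ^ 2 - 4 * A * F 1 + 4 * F 2)) / 2 = min p₀ p₁ := by
  have hsum : A = p₀ + p₁ := hA.trans (mixture_moment_ratio hα0.ne' hα1.ne hne hF)
  have hdisc : A ^ 2 - 4 * A * F 1 + 4 * F 2 = (p₀ - p₁) ^ 2 := hsum ▸ mixture_discriminant hF
  rw [hdisc, Real.sqrt_sq_eq_abs, hsum]
  exact ⟨rfl, add_add_abs_sub_div_two p₀ p₁, add_sub_abs_sub_div_two p₀ p₁⟩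
end

section
/- Let q₀, q₁ ∈ (0,1) with q₀ ≠ q₁. For each n, let Λ_n be a positive integer with Λ_n / log n → ∞, set τ̂_n = 2 Λ_n^{2/3} (log n)^{1/3}, let K_n ≤ n, let r₁,…,r_{K_n} be distinct indices in {1,…,n}, and let {L_{i,j} : 1 ≤ i ≤ n, 1 ≤ j ≤ K_n} be mutually independent random variables with L_{r_j, j} ~ Binom(Λ_n, q₁) for each j and L_{i,j} ~ Binom(Λ_n, q₀) for all i ≠ r_j. Then P( for every j ∈ {1,…,K_n}: |L_{r_j,j} − Λ_n q₀| > τ̂_n, and for every i ≠ r_j: |L_{i,j} − Λ_n q₀| ≤ τ̂_n ) → 1 as n → ∞. -/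
/-!
A Binomial(N, q) count satisfies the Chernoff bound
`P(|X - N q| ≥ t) ≤ 2 exp(N l² - l t)` for `0 ≤ l ≤ 1`, obtained from
`e^l ≤ 1 + l + l²` in the moment generating function. Put `s = (Λ / log n)^{1/3} → ∞`, so that
`Λ = s³ log n` and `τ̂ = 2 s² log n`. A non-outlier crosses the threshold with probability at
most `2 exp(-s log n)` (take `l = 1/s`); once `s δ ≥ 4`, where `δ = |q₁ - q₀|`, an outlier lies
within `τ̂ ≤ Λ δ / 2` of `Λ q₀` only if it deviates by `Λ δ / 2` from its own mean `Λ q₁`, which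
has probability at most `2 exp(-Λ δ² / 16)` (take `l = δ / 4`). Both bounds are at most `2 n⁻³`
once `s ≥ 3`, and a union bound over the `n K_n ≤ n²` pairs leaves a failure probability of at
most `2 / n`.
-/

open MeasureTheory ProbabilityTheory Filter

open Finset Real
open scoped ENNReal

noncomputable def binomialPMF (N : ℕ) (q : ℝ) (k : ℕ) : ℝ :=
  N.choose k * q ^ k * (1 - q) ^ (N - k)

lemma binomialPMF_nonneg {q : ℝ} (hq0 : 0 ≤ q) (hq1 : q ≤ 1) (N k : ℕ) :
    0 ≤ binomialPMF N q k := by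
  unfold binomialPMF
  have : 0 ≤ 1 - q := by linarith
  positivity

lemma binomialPMF_eq_zero_of_lt {N k : ℕ} (q : ℝ) (h : N < k) : binomialPMF N q k = 0 := by
  simp [binomialPMF, Nat.choose_eq_zero_of_lt h]

lemma sum_binomialPMF_mul_exp (N : ℕ) (q l : ℝ) :
    ∑ k ∈ range (N + 1), binomialPMF N q k * exp (l * k) = (q * exp l + (1 - q)) ^ N := by
  rw [add_pow]
  refine sum_congr rfl fun k _ => ?_
  rw [binomialPMF, mul_comm l, exp_nat_mul, mul_pow]
  ring

lemma mul_exp_add_one_sub_le {q : ℝ} (hq0 : 0 ≤ q) {l : ℝ} (hl : |l| ≤ 1) :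
    q * exp l + (1 - q) ≤ exp (q * (l + l ^ 2)) :=
  calc q * exp l + (1 - q) = q * (exp l - 1) + 1 := by ring
    _ ≤ exp (q * (exp l - 1)) := add_one_le_exp _
    _ ≤ exp (q * (l + l ^ 2)) := by
      gcongr
      linarith [(abs_le.1 (abs_exp_sub_one_sub_id_le hl)).2]

lemma sum_binomialPMF_mul_exp_sub_le {q : ℝ} (hq0 : 0 ≤ q) (hq1 : q ≤ 1) (N : ℕ) {l : ℝ}
    (hl : |l| ≤ 1) :
    ∑ k ∈ range (N + 1), binomialPMF N q k * exp (l * (k - N * q)) ≤ exp (N * l ^ 2) :=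
  calc ∑ k ∈ range (N + 1), binomialPMF N q k * exp (l * (k - N * q))
      = exp (-(l * (N * q))) * (q * exp l + (1 - q)) ^ N := by
        rw [← sum_binomialPMF_mul_exp, mul_sum]
        refine sum_congr rfl fun k _ => ?_
        rw [mul_sub, sub_eq_neg_add, exp_add]
        ring
    _ ≤ exp (-(l * (N * q))) * exp (q * (l + l ^ 2)) ^ N := by
        have : 0 ≤ q * exp l + (1 - q) := by have := exp_pos l; nlinarith
        gcongr
        exact mul_exp_add_one_sub_le hq0 hl
    _ = exp (N * q * l ^ 2) := by rw [← exp_nat_mul, ← exp_add]; ring_nf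
    _ ≤ exp (N * l ^ 2) := by gcongr; nlinarith [sq_nonneg l]

lemma one_le_exp_add_exp_of_le_abs {l t x : ℝ} (hl : 0 ≤ l) (h : t ≤ |x|) :
    1 ≤ exp (l * x - l * t) + exp (-l * x - l * t) := by
  rcases le_abs'.1 h with h | h
  · have : 0 ≤ -l * x - l * t := by nlinarith
    linarith [one_le_exp this, exp_pos (l * x - l * t)]
  · have : 0 ≤ l * x - l * t := by nlinarith
    linarith [one_le_exp this, exp_pos (-l * x - l * t)]

lemma sum_binomialPMF_tail_le {q : ℝ} (hq0 : 0 ≤ q) (hq1 : q ≤ 1) (N : ℕ) {l : ℝ}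
    (hl0 : 0 ≤ l) (hl1 : l ≤ 1) (t : ℝ) :
    ∑ k ∈ range (N + 1), (if t ≤ |(k : ℝ) - N * q| then binomialPMF N q k else 0)
      ≤ 2 * exp (N * l ^ 2 - l * t) :=
  calc ∑ k ∈ range (N + 1), (if t ≤ |(k : ℝ) - N * q| then binomialPMF N q k else 0)
      ≤ ∑ k ∈ range (N + 1), binomialPMF N q k *
          (exp (l * (k - N * q) - l * t) + exp (-l * (k - N * q) - l * t)) := by
        refine sum_le_sum fun k _ => ?_
        have hp := binomialPMF_nonneg hq0 hq1 N k
        split_ifs with h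
        · exact le_mul_of_one_le_right hp (one_le_exp_add_exp_of_le_abs hl0 h)
        · positivity
    _ = exp (-(l * t)) * (∑ k ∈ range (N + 1), binomialPMF N q k * exp (l * (k - N * q))
          + ∑ k ∈ range (N + 1), binomialPMF N q k * exp (-l * (k - N * q))) := by
        rw [← sum_add_distrib, mul_sum]
        refine sum_congr rfl fun k _ => ?_
        simp only [sub_eq_add_neg _ (l * t), exp_add]
        ring
    _ ≤ exp (-(l * t)) * (exp (N * l ^ 2) + exp (N * (-l) ^ 2)) := by
        have hl : |l| ≤ 1 := abs_le.2 ⟨by linarith, hl1⟩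
        gcongr
        · exact sum_binomialPMF_mul_exp_sub_le hq0 hq1 N hl
        · exact sum_binomialPMF_mul_exp_sub_le hq0 hq1 N (by rwa [abs_neg])
    _ = 2 * exp (N * l ^ 2 - l * t) := by rw [neg_sq, sub_eq_neg_add, exp_add]; ring

lemma measure_le_sum_of_law {Ω : Type*} [MeasurableSpace Ω] (μ : Measure Ω) (X : Ω → ℕ)
    {p : ℕ → ℝ} (hp : ∀ k, 0 ≤ p k) {N : ℕ} (hsupp : ∀ k, N < k → p k = 0)
    (hlaw : ∀ k, μ {ω | X ω = k} = ENNReal.ofReal (p k)) (P : ℕ → Prop) [DecidablePred P] :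
    μ {ω | P (X ω)} ≤ ENNReal.ofReal (∑ k ∈ range (N + 1), if P k then p k else 0) :=
  calc μ {ω | P (X ω)} ≤ μ (⋃ k, {ω | X ω = k ∧ P k}) :=
        measure_mono fun ω h => Set.mem_iUnion.2 ⟨X ω, rfl, h⟩
    _ ≤ ∑' k, μ {ω | X ω = k ∧ P k} := measure_iUnion_le _
    _ = ∑' k, ENNReal.ofReal (if P k then p k else 0) := by
        congr 1; ext k
        by_cases h : P k <;> simp [h, hlaw]
    _ = ∑ k ∈ range (N + 1), ENNReal.ofReal (if P k then p k else 0) :=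
        tsum_eq_sum fun k hk => by simp [hsupp k (by simpa using hk)]
    _ = ENNReal.ofReal (∑ k ∈ range (N + 1), if P k then p k else 0) :=
        (ENNReal.ofReal_sum_of_nonneg fun k _ => by split_ifs; exacts [hp k, le_rfl]).symm

lemma measure_tail_le_of_binomial {Ω : Type*} [MeasurableSpace Ω] {μ : Measure Ω}
    {X : Ω → ℕ} {N : ℕ} {q : ℝ} (hq0 : 0 ≤ q) (hq1 : q ≤ 1)
    (hlaw : ∀ k, μ {ω | X ω = k} = ENNReal.ofReal (binomialPMF N q k))
    {l : ℝ} (hl0 : 0 ≤ l) (hl1 : l ≤ 1) (t : ℝ) :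
    μ {ω | t ≤ |(X ω : ℝ) - N * q|} ≤ ENNReal.ofReal (2 * exp (N * l ^ 2 - l * t)) := by
  classical
  refine (measure_le_sum_of_law μ X (binomialPMF_nonneg hq0 hq1 N)
    (fun k => binomialPMF_eq_zero_of_lt q) hlaw (fun k : ℕ => t ≤ |(k : ℝ) - N * q|)).trans ?_
  exact ENNReal.ofReal_le_ofReal (sum_binomialPMF_tail_le hq0 hq1 N hl0 hl1 t)

lemma cube_rpow_one_third_div_mul {a b : ℝ} (ha : 0 ≤ a) (hb : 0 < b) :
    ((a / b) ^ ((1 : ℝ) / 3)) ^ 3 * b = a := by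
  rw [← rpow_natCast, ← rpow_mul (div_nonneg ha hb.le)]
  norm_num
  field_simp

lemma rpow_two_thirds_mul_rpow_one_third {a b : ℝ} (ha : 0 ≤ a) (hb : 0 < b) :
    a ^ ((2 : ℝ) / 3) * b ^ ((1 : ℝ) / 3) = ((a / b) ^ ((1 : ℝ) / 3)) ^ 2 * b := by
  rw [← rpow_natCast, ← rpow_mul (div_nonneg ha hb.le), div_rpow ha hb.le]
  norm_num
  rw [div_mul_eq_mul_div, eq_div_iff (rpow_pos_of_pos hb _).ne', mul_assoc, ← rpow_add hb]
  norm_num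

lemma tendsto_measure_nhds_one_of_union_bound {Ω : ℕ → Type*}
    [∀ n, MeasurableSpace (Ω n)] (μ : ∀ n, Measure (Ω n)) [∀ n, IsProbabilityMeasure (μ n)]
    {ι : ℕ → Type*} [∀ n, Fintype (ι n)] {E : ∀ n, Set (Ω n)} (G : ∀ n, ι n → Set (Ω n))
    (hG : ∀ n, ⋂ p, G n p ⊆ E n) {ε : ℕ → ℝ}
    (hε : ∀ᶠ n in atTop, ∀ p, μ n (G n p)ᶜ ≤ ENNReal.ofReal (ε n))
    (hlim : Tendsto (fun n => Fintype.card (ι n) * ε n) atTop (nhds 0)) :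
    Tendsto (fun n => μ n (E n)) atTop (nhds 1) := by
  have hcompl : ∀ᶠ n in atTop, μ n (E n)ᶜ ≤ ENNReal.ofReal (Fintype.card (ι n) * ε n) := by
    filter_upwards [hε] with n hn
    calc μ n (E n)ᶜ ≤ μ n (⋃ p, (G n p)ᶜ) := by
          rw [← Set.compl_iInter]; exact measure_mono (Set.compl_subset_compl.2 (hG n))
      _ ≤ ∑ p, μ n (G n p)ᶜ := measure_iUnion_fintype_le _ _
      _ ≤ ∑ _p : ι n, ENNReal.ofReal (ε n) := sum_le_sum fun p _ => hn p
      _ = ENNReal.ofReal (Fintype.card (ι n) * ε n) := by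
          rw [sum_const, card_univ, nsmul_eq_mul, ENNReal.ofReal_mul (Nat.cast_nonneg _),
            ENNReal.ofReal_natCast]
  have hlower : Tendsto (fun n => 1 - ENNReal.ofReal (Fintype.card (ι n) * ε n)) atTop
      (nhds 1) := by
    simpa using ENNReal.Tendsto.sub tendsto_const_nhds (ENNReal.tendsto_ofReal hlim)
      (Or.inl ENNReal.one_ne_top)
  refine tendsto_of_tendsto_of_tendsto_of_le_of_le' hlower tendsto_const_nhds ?_
    (Eventually.of_forall fun n => prob_le_one)
  filter_upwards [hcompl] with n hn
  calc 1 - ENNReal.ofReal (Fintype.card (ι n) * ε n) ≤ 1 - μ n (E n)ᶜ := tsub_le_tsub_left hn 1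
    _ ≤ μ n (E n) := by
      rw [tsub_le_iff_right, ← measure_univ (μ := μ n), ← Set.union_compl_self (E n)]
      exact measure_union_le _ _

section Detection

variable {Ω : Type*} [MeasurableSpace Ω] {μ : Measure Ω} {X : Ω → ℕ} {N : ℕ} {s ℓ τ : ℝ}

lemma measure_false_alarm_le {q : ℝ} (hq0 : 0 ≤ q) (hq1 : q ≤ 1)
    (hlaw : ∀ k, μ {ω | X ω = k} = ENNReal.ofReal (binomialPMF N q k))
    (hN : (N : ℝ) = s ^ 3 * ℓ) (hτ : τ = 2 * s ^ 2 * ℓ) (hs : 3 ≤ s) (hℓ : 0 ≤ ℓ) :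
    μ {ω | τ < |(X ω : ℝ) - N * q|} ≤ ENNReal.ofReal (2 * exp (-(3 * ℓ))) := by
  have hs0 : 0 < s := by linarith
  have hexp : N * (1 / s) ^ 2 - 1 / s * τ = -(s * ℓ) := by
    rw [hN, hτ]; field_simp; ring
  refine (measure_mono fun ω (h : τ < _) => h.le).trans <|
    (measure_tail_le_of_binomial hq0 hq1 hlaw (l := 1 / s) (by positivity)
      ((div_le_one hs0).2 (by linarith)) τ).trans ?_
  rw [hexp]
  gcongr

lemma measure_missed_outlier_le {q₀ q₁ : ℝ} (hq₁0 : 0 ≤ q₁) (hq₁1 : q₁ ≤ 1)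
    (hlaw : ∀ k, μ {ω | X ω = k} = ENNReal.ofReal (binomialPMF N q₁ k))
    (hN : (N : ℝ) = s ^ 3 * ℓ) (hτ : τ = 2 * s ^ 2 * ℓ) (hs : 3 ≤ s) (hℓ : 0 ≤ ℓ)
    (hsδ : 4 ≤ s * |q₁ - q₀|) (hδ : |q₁ - q₀| ≤ 4) :
    μ {ω | |(X ω : ℝ) - N * q₀| ≤ τ} ≤ ENNReal.ofReal (2 * exp (-(3 * ℓ))) := by
  set δ := |q₁ - q₀|
  have hτδ : τ ≤ N * δ / 2 := by
    rw [hN, hτ]; nlinarith [mul_nonneg (mul_nonneg (sq_nonneg s) hℓ) (sub_nonneg.2 hsδ)]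
  have hsub : {ω | |(X ω : ℝ) - N * q₀| ≤ τ} ⊆ {ω | N * δ / 2 ≤ |(X ω : ℝ) - N * q₁|} := by
    intro ω (h : |(X ω : ℝ) - N * q₀| ≤ τ)
    have hgap : |(N : ℝ) * q₁ - N * q₀| = N * δ := by
      rw [← mul_sub, abs_mul, Nat.abs_cast]
    have := abs_sub_le ((N : ℝ) * q₁) (X ω) (N * q₀)
    rw [hgap, abs_sub_comm] at this
    show N * δ / 2 ≤ |(X ω : ℝ) - N * q₁|
    linarith
  have h48 : 3 * 4 ^ 2 ≤ s * (s * δ) ^ 2 := by gcongr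
  have hexp : N * (δ / 4) ^ 2 - δ / 4 * (N * δ / 2) ≤ -(3 * ℓ) := by
    rw [hN]; nlinarith [mul_le_mul_of_nonneg_right h48 hℓ]
  refine (measure_mono hsub).trans <|
    (measure_tail_le_of_binomial hq₁0 hq₁1 hlaw (l := δ / 4) (by positivity)
      (by linarith) _).trans ?_
  gcongr

end Detection

theorem stmt_14_general (q₀ q₁ : ℝ) (hq₀0 : 0 < q₀) (hq₀1 : q₀ < 1) (hq₁0 : 0 < q₁) (hq₁1 : q₁ < 1)
    (hne : q₀ ≠ q₁)
    (Ω : ℕ → Type*) [∀ n, MeasurableSpace (Ω n)]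
    (μ : ∀ n, Measure (Ω n)) [∀ n, IsProbabilityMeasure (μ n)]
    (Λ : ℕ → ℕ)
    (hΛ : Tendsto (fun n : ℕ => (Λ n : ℝ) / Real.log n) atTop atTop)
    (τ : ℕ → ℝ)
    (hτ : ∀ n, τ n = 2 * (Λ n : ℝ) ^ ((2 : ℝ) / 3) * (Real.log n) ^ ((1 : ℝ) / 3))
    (K : ℕ → ℕ) (hK : ∀ n, K n ≤ n)
    (r : ∀ n, Fin (K n) → Fin n)
    (L : ∀ n, Fin n → Fin (K n) → Ω n → ℕ)
    (hlaw1 : ∀ n (j : Fin (K n)) (k : ℕ),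
      μ n {ω | L n (r n j) j ω = k}
        = ENNReal.ofReal (((Λ n).choose k : ℝ) * q₁ ^ k * (1 - q₁) ^ (Λ n - k)))
    (hlaw0 : ∀ n (i : Fin n) (j : Fin (K n)), i ≠ r n j → ∀ k : ℕ,
      μ n {ω | L n i j ω = k}
        = ENNReal.ofReal (((Λ n).choose k : ℝ) * q₀ ^ k * (1 - q₀) ^ (Λ n - k))) :
    Tendsto
      (fun n : ℕ =>
        μ n {ω | ∀ j : Fin (K n),
          τ n < |(L n (r n j) j ω : ℝ) - (Λ n : ℝ) * q₀| ∧
          ∀ i : Fin n, i ≠ r n j → |(L n i j ω : ℝ) - (Λ n : ℝ) * q₀| ≤ τ n})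
      atTop (nhds 1) := by
  classical
  set δ := |q₁ - q₀|
  have hδ0 : 0 < δ := abs_pos.2 (sub_ne_zero.2 hne.symm)
  have hδ4 : δ ≤ 4 := by rw [abs_le]; constructor <;> linarith
  have hs : Tendsto (fun n : ℕ => ((Λ n : ℝ) / log n) ^ ((1 : ℝ) / 3)) atTop atTop :=
    (tendsto_rpow_atTop (by norm_num)).comp hΛ
  refine tendsto_measure_nhds_one_of_union_bound μ
    (fun n (p : Fin n × Fin (K n)) => {ω | if p.1 = r n p.2
      then τ n < |(L n p.1 p.2 ω : ℝ) - Λ n * q₀| else |(L n p.1 p.2 ω : ℝ) - Λ n * q₀| ≤ τ n})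
    (fun n ω hω j => ?_) (ε := fun n => 2 * exp (-(3 * log n))) ?_ ?_
  · simp only [Set.mem_iInter, Set.mem_ofPred_eq] at hω
    exact ⟨by simpa using hω (r n j, j), fun i hi => by simpa [hi] using hω (i, j)⟩
  · filter_upwards [eventually_ge_atTop 2, hs.eventually_ge_atTop (max 3 (4 / δ))]
      with n hn hsn ⟨i, j⟩
    have hℓ : 0 < log n := log_pos (by exact_mod_cast hn)
    have hN := (cube_rpow_one_third_div_mul (Nat.cast_nonneg (Λ n)) hℓ).symm
    have hτn : τ n = 2 * ((Λ n / log n) ^ ((1 : ℝ) / 3)) ^ 2 * log n := by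
      rw [hτ, mul_assoc, rpow_two_thirds_mul_rpow_one_third (Nat.cast_nonneg _) hℓ, mul_assoc]
    have hs3 : 3 ≤ (Λ n / log n) ^ ((1 : ℝ) / 3) := le_of_max_le_left hsn
    have hsδ : 4 ≤ (Λ n / log n) ^ ((1 : ℝ) / 3) * δ :=
      (div_le_iff₀ hδ0).1 (le_of_max_le_right hsn)
    by_cases h : i = r n j
    · subst h
      simpa [Set.compl_ofPred] using measure_missed_outlier_le hq₁0.le hq₁1.le (hlaw1 n j)
        hN hτn hs3 hℓ.le hsδ hδ4
    · simpa [h, Set.compl_ofPred] using measure_false_alarm_le hq₀0.le hq₀1.le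
        (hlaw0 n i j h) hN hτn hs3 hℓ.le
  · refine squeeze_zero' (Eventually.of_forall fun n => by positivity) ?_
      (tendsto_const_div_atTop_nhds_zero_nat 2)
    filter_upwards [eventually_ge_atTop 1] with n hn
    have hn0 : (0 : ℝ) < n := by exact_mod_cast hn
    have hexp : exp (-(3 * log n)) = ((n : ℝ) ^ 3)⁻¹ := by
      rw [exp_neg, show (3 : ℝ) * log n = log ((n : ℝ) ^ 3) by simp [log_pow],
        exp_log (by positivity)]
    have hKn : (K n : ℝ) ≤ n := by exact_mod_cast hK n
    simp only [Fintype.card_prod, Fintype.card_fin, Nat.cast_mul, hexp]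
    calc (n : ℝ) * K n * (2 * ((n : ℝ) ^ 3)⁻¹) ≤ n * n * (2 * ((n : ℝ) ^ 3)⁻¹) := by gcongr
      _ = 2 / n := by field_simp

/-- Seeded deletion detection via outlier detection: with `q₀ ≠ q₁` in `(0,1)`, seed size
`Λ_n = ω(log n)`, threshold `τ̂_n = 2 Λ_n^{2/3} (log n)^{1/3}`, distinct matching indices
`r_j`, and independent `L_{i,j}` distributed `Binom(Λ_n, q₁)` for `i = r_j` and
`Binom(Λ_n, q₀)` otherwise, with probability tending to `1` every outlier deviates from
`Λ_n q₀` by more than `τ̂_n` and every non-outlier deviates by at most `τ̂_n`. -/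
theorem stmt_14 (q₀ q₁ : ℝ) (hq₀0 : 0 < q₀) (hq₀1 : q₀ < 1) (hq₁0 : 0 < q₁) (hq₁1 : q₁ < 1)
    (hne : q₀ ≠ q₁)
    (Ω : ℕ → Type*) [∀ n, MeasurableSpace (Ω n)]
    (μ : ∀ n, Measure (Ω n)) [∀ n, IsProbabilityMeasure (μ n)]
    (Λ : ℕ → ℕ) (hΛpos : ∀ n, 1 ≤ Λ n)
    (hΛ : Tendsto (fun n : ℕ => (Λ n : ℝ) / Real.log n) atTop atTop)
    (τ : ℕ → ℝ)
    (hτ : ∀ n, τ n = 2 * (Λ n : ℝ) ^ ((2 : ℝ) / 3) * (Real.log n) ^ ((1 : ℝ) / 3))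
    (K : ℕ → ℕ) (hK : ∀ n, K n ≤ n)
    (r : ∀ n, Fin (K n) → Fin n) (hr : ∀ n, Function.Injective (r n))
    (L : ∀ n, Fin n → Fin (K n) → Ω n → ℕ)
    (hmeas : ∀ n i j, Measurable (L n i j))
    (hindep : ∀ n,
      iIndepFun
        (fun p : Fin n × Fin (K n) => L n p.1 p.2) (μ n))
    (hlaw1 : ∀ n (j : Fin (K n)) (k : ℕ),
      μ n {ω | L n (r n j) j ω = k}
        = ENNReal.ofReal (((Λ n).choose k : ℝ) * q₁ ^ k * (1 - q₁) ^ (Λ n - k)))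
    (hlaw0 : ∀ n (i : Fin n) (j : Fin (K n)), i ≠ r n j → ∀ k : ℕ,
      μ n {ω | L n i j ω = k}
        = ENNReal.ofReal (((Λ n).choose k : ℝ) * q₀ ^ k * (1 - q₀) ^ (Λ n - k))) :
    Tendsto
      (fun n : ℕ =>
        μ n {ω | ∀ j : Fin (K n),
          τ n < |(L n (r n j) j ω : ℝ) - (Λ n : ℝ) * q₀| ∧
          ∀ i : Fin n, i ≠ r n j → |(L n i j ω : ℝ) - (Λ n : ℝ) * q₀| ≤ τ n})
      atTop (nhds 1) :=
  stmt_14_general q₀ q₁ hq₀0 hq₀1 hq₁0 hq₁1 hne Ω μ Λ hΛ τ hτ K hK r L hlaw1 hlaw0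
end
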